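/- Let V be a finite set of vertices of a tournament G listed as v_1, ..., v_n. Define a sequence inductively: k_1 = v_1; for i ≥ 2, if there is a path of length at most 2 in G from k_{i-1} to v_i, then k_i = k_{i-1}, else k_i = v_i. Then for every i, k_i is a weak king of {v_1, ..., v_i}, and in particular k_n is a king of G. -/
import Mathlib


def IsTournament {V : Type*} (E : V → V → Prop) : Prop :=
  (∀ v, ¬ E v v) ∧ ∀ u v : V, u ≠ v → (E u v ↔ ¬ E v u)

/-- There is a directed path of length at most 2 from `u` to `w`. -/
def Path2 {V : Type*} (E : V → V → Prop) (u w : V) : Prop :=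
  u = w ∨ E u w ∨ ∃ j : V, E u j ∧ E j w

/-- `k` is a weak king for `U`: `k ∈ U` and every vertex of `U` is reachable
from `k` by a directed path of length at most 2. -/
def IsWeakKing {V : Type*} (E : V → V → Prop) (U : Set V) (k : V) : Prop :=
  k ∈ U ∧ ∀ x ∈ U, Path2 E k x

/-- `k` is a king of the whole tournament. -/
def IsKing {V : Type*} (E : V → V → Prop) (k : V) : Prop :=
  ∀ x : V, Path2 E k x

lemma step_lemma {V : Type*} (E : V → V → Prop) (hT : IsTournament E)
    (k' w : V) (U : Set V) (hW : IsWeakKing E U k')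
    (hnp : ¬ Path2 E k' w) : ∀ x ∈ U, Path2 E w x := by
  obtain ⟨hirr, hasym⟩ := hT
  intro x hx
  have hpx := hW.2 x hx
  have hne : k' ≠ w := fun h => hnp (Or.inl h)
  have hEwk' : E w k' := by
    have := (hasym k' w hne).not_left.mp (fun h => hnp (Or.inr (Or.inl h)))
    simpa using ((hasym w k' hne.symm).mpr (fun h => hnp (Or.inr (Or.inl h))))
  rcases hpx with rfl | hE | ⟨j, hE1, hE2⟩
  · exact Or.inr (Or.inl hEwk')
  · -- E k' x, so x ≠ w, and ¬ E x w (else length-2 path), so E w x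
    have hxw : x ≠ w := by rintro rfl; exact hnp (Or.inr (Or.inl hE))
    have hnxw : ¬ E x w := fun h => hnp (Or.inr (Or.inr ⟨x, hE, h⟩))
    exact Or.inr (Or.inl ((hasym w x hxw.symm).mpr hnxw))
  · -- E k' j, E j x; j ≠ w, ¬ E j w so E w j, giving path w → j → x
    have hjw : j ≠ w := by rintro rfl; exact hnp (Or.inr (Or.inl hE1))
    have hnjw : ¬ E j w := fun h => hnp (Or.inr (Or.inr ⟨j, hE1, h⟩))
    exact Or.inr (Or.inr ⟨j, (hasym w j hjw.symm).mpr hnjw, hE2⟩)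

theorem incremental_king_algorithm {V : Type*} [Fintype V]
    (E : V → V → Prop) (hT : IsTournament E)
    (n : ℕ) (hn : 1 ≤ n) (v : ℕ → V)
    (hlist : ∀ x : V, ∃ i, i < n ∧ v i = x)
    (k : ℕ → V) (hk0 : k 0 = v 0)
    (hk : ∀ i, 1 ≤ i → i < n →
      (Path2 E (k (i - 1)) (v i) → k i = k (i - 1)) ∧
      (¬ Path2 E (k (i - 1)) (v i) → k i = v i)) :
    (∀ i, i < n → IsWeakKing E {x : V | ∃ j, j ≤ i ∧ v j = x} (k i)) ∧
      IsKing E (k (n - 1)) := by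
  have main : ∀ i, i < n → IsWeakKing E {x : V | ∃ j, j ≤ i ∧ v j = x} (k i) := by
    intro i
    induction i with
    | zero =>
      intro _
      refine ⟨⟨0, le_refl 0, hk0.symm⟩, ?_⟩
      rintro x ⟨j, hj, rfl⟩
      interval_cases j
      exact Or.inl (by rw [hk0])
    | succ m ih =>
      intro hm
      have hW := ih (by omega)
      have hkm := hk (m + 1) (by omega) hm
      simp only [Nat.add_sub_cancel] at hkm
      by_cases hp : Path2 E (k m) (v (m + 1))
      · have hkeq : k (m + 1) = k m := hkm.1 hp
        rw [hkeq]
        refine ⟨?_, ?_⟩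
        · obtain ⟨j, hj, hv⟩ := hW.1
          exact ⟨j, by omega, hv⟩
        · rintro x ⟨j, hj, rfl⟩
          rcases Nat.lt_or_ge j (m + 1) with h | h
          · exact hW.2 _ ⟨j, by omega, rfl⟩
          · have : j = m + 1 := by omega
            subst this; exact hp
      · have hkeq : k (m + 1) = v (m + 1) := hkm.2 hp
        rw [hkeq]
        refine ⟨⟨m + 1, le_refl _, rfl⟩, ?_⟩
        rintro x ⟨j, hj, rfl⟩
        rcases Nat.lt_or_ge j (m + 1) with h | h
        · exact step_lemma E hT (k m) (v (m + 1)) _ hW hp (v j) ⟨j, by omega, rfl⟩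
        · have : j = m + 1 := by omega
          subst this; exact Or.inl rfl
  refine ⟨main, ?_⟩
  intro x
  obtain ⟨i, hi, rfl⟩ := hlist x
  exact (main (n - 1) (by omega)).2 (v i) ⟨i, by omega, rfl⟩
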